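/- arXiv:2006.13318 — 7 statements merged into one kernel-verified Lean document; each statement's English description precedes it below -/
import Mathlib

section
/- Let G be a finite simple graph on N vertices with adjacency matrix A and diagonal degree matrix D. Let Ã = A + I_N and D̃ = D + I_N, and define the augmented normalized Laplacian Δ̃ = I_N − D̃^{−1/2} Ã D̃^{−1/2}. Then every eigenvalue λ of Δ̃ satisfies 0 ≤ λ < 2. -/
/-!
Write `P = D̃^{-1/2}`. Since `P D̃ P = 1`, the augmented normalized Laplacian is the congruence
`Δ̃ = P (D̃ - Ã) P = P (D - A) P` of the graph Laplacian, hence positive semidefinite, while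
`2 - Δ̃ = P (D̃ + Ã) P = P (D + A + 2) P` is a congruence of the signless Laplacian
`D + A = B Bᵀ` (`B` the unoriented incidence matrix) plus `2`, hence positive definite.
-/

open Matrix

namespace Matrix

variable {n : Type*} [Fintype n] {M : Matrix n n ℝ} {μ : ℝ} {v : n → ℝ}

theorem PosSemidef.nonneg_of_mulVec_eq_smul (hM : M.PosSemidef) (hv : v ≠ 0)
    (h : M *ᵥ v = μ • v) : 0 ≤ μ := by
  have hquad := hM.dotProduct_mulVec_nonneg v
  rw [h, dotProduct_smul, smul_eq_mul] at hquad
  exact nonneg_of_mul_nonneg_left hquad (dotProduct_star_self_pos_iff.2 hv)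

theorem PosDef.pos_of_mulVec_eq_smul (hM : M.PosDef) (hv : v ≠ 0)
    (h : M *ᵥ v = μ • v) : 0 < μ := by
  have hquad := hM.dotProduct_mulVec_pos hv
  rw [h, dotProduct_smul, smul_eq_mul] at hquad
  exact pos_of_mul_pos_left hquad (dotProduct_star_self_nonneg v)

end Matrix

namespace SimpleGraph

variable {V : Type*} [Fintype V] [DecidableEq V] (G : SimpleGraph V) [DecidableRel G.Adj]

theorem degMatrix_add_adjMatrix_eq_incMatrix_mul_transpose (R : Type*) [Semiring R] :
    G.degMatrix R + G.adjMatrix R = G.incMatrix R * (G.incMatrix R)ᵀ := by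
  rw [incMatrix_mul_transpose]
  ext i j
  by_cases hij : i = j
  · subst hij
    simp [degMatrix]
  · simp [degMatrix, hij]

theorem posSemidef_degMatrix_add_adjMatrix (R : Type*) [CommRing R] [PartialOrder R]
    [StarRing R] [StarOrderedRing R] [TrivialStar R] :
    (G.degMatrix R + G.adjMatrix R).PosSemidef := by
  rw [degMatrix_add_adjMatrix_eq_incMatrix_mul_transpose, ← conjTranspose_eq_transpose_of_trivial]
  exact posSemidef_self_mul_conjTranspose _

noncomputable def augDegInvSqrt : Matrix V V ℝ :=
  diagonal fun i => (√((G.degree i : ℝ) + 1))⁻¹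

noncomputable def augNormLapMatrix : Matrix V V ℝ :=
  1 - G.augDegInvSqrt * (G.adjMatrix ℝ + 1) * G.augDegInvSqrt

theorem conjTranspose_augDegInvSqrt : G.augDegInvSqrtᴴ = G.augDegInvSqrt := by
  simp [augDegInvSqrt]

theorem augDegInvSqrt_mul_mul_self :
    G.augDegInvSqrt * (G.degMatrix ℝ + 1) * G.augDegInvSqrt = 1 := by
  have hpos (i : V) : (0 : ℝ) < G.degree i + 1 := by positivity
  rw [degMatrix, ← diagonal_one, diagonal_add, augDegInvSqrt, diagonal_mul_diagonal,
    diagonal_mul_diagonal]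
  congr 1
  ext i
  field_simp [(Real.sqrt_pos.2 (hpos i)).ne']
  exact (Real.sq_sqrt (hpos i).le).symm

theorem mulVec_injective_augDegInvSqrt : Function.Injective G.augDegInvSqrt.mulVec := by
  refine mulVec_injective_of_det_ne_zero ?_
  rw [augDegInvSqrt, det_diagonal]
  exact Finset.prod_ne_zero_iff.2 fun i _ => by positivity

theorem augNormLapMatrix_eq :
    G.augNormLapMatrix = G.augDegInvSqrt * G.lapMatrix ℝ * G.augDegInvSqrt := by
  rw [lapMatrix, ← add_sub_add_right_eq_sub _ _ (1 : Matrix V V ℝ), Matrix.mul_sub,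
    Matrix.sub_mul, augDegInvSqrt_mul_mul_self, augNormLapMatrix]

theorem two_sub_augNormLapMatrix_eq :
    2 - G.augNormLapMatrix =
      G.augDegInvSqrt * (G.degMatrix ℝ + G.adjMatrix ℝ + 2) * G.augDegInvSqrt := by
  have hsplit :
      G.degMatrix ℝ + G.adjMatrix ℝ + 2 = (G.degMatrix ℝ + 1) + (G.adjMatrix ℝ + 1) := by
    rw [← one_add_one_eq_two]
    abel
  rw [hsplit, Matrix.mul_add, Matrix.add_mul, augDegInvSqrt_mul_mul_self, augNormLapMatrix,
    ← one_add_one_eq_two]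
  abel

theorem posSemidef_augNormLapMatrix : G.augNormLapMatrix.PosSemidef := by
  simpa only [augNormLapMatrix_eq, conjTranspose_augDegInvSqrt] using
    (posSemidef_lapMatrix ℝ G).conjTranspose_mul_mul_same G.augDegInvSqrt

theorem posDef_two_sub_augNormLapMatrix : (2 - G.augNormLapMatrix).PosDef := by
  have hsignless : (G.degMatrix ℝ + G.adjMatrix ℝ + 2).PosDef :=
    PosDef.posSemidef_add (G.posSemidef_degMatrix_add_adjMatrix ℝ) (.ofNat 2)
  simpa only [two_sub_augNormLapMatrix_eq, conjTranspose_augDegInvSqrt] using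
    hsignless.conjTranspose_mul_mul_same G.mulVec_injective_augDegInvSqrt

end SimpleGraph

theorem augNormLaplacian_eigenvalue_mem_Ico_general
    (N : ℕ) (G : SimpleGraph (Fin N)) [DecidableRel G.Adj]
    (A Atil DtilInvSqrt Δ : Matrix (Fin N) (Fin N) ℝ)
    (hA : A = G.adjMatrix ℝ)
    (hAtil : Atil = A + 1)
    (hDtilInvSqrt : DtilInvSqrt = Matrix.diagonal
      (fun i => (Real.sqrt ((G.degree i : ℝ) + 1))⁻¹))
    (hΔ : Δ = 1 - DtilInvSqrt * Atil * DtilInvSqrt)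
    (μ : ℝ) (v : Fin N → ℝ) (hv : v ≠ 0) (heig : Δ.mulVec v = μ • v) :
    0 ≤ μ ∧ μ < 2 := by
  subst hA hAtil hDtilInvSqrt hΔ
  refine ⟨G.posSemidef_augNormLapMatrix.nonneg_of_mulVec_eq_smul hv heig, ?_⟩
  have h2 : (2 - G.augNormLapMatrix) *ᵥ v = (2 - μ) • v := by
    rw [sub_mulVec, ofNat_mulVec, sub_smul]
    exact congrArg _ heig
  linarith [G.posDef_two_sub_augNormLapMatrix.pos_of_mulVec_eq_smul hv h2]

/-- The eigenvalues of the augmented normalized Laplacian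
`Δ̃ = I - D̃^{-1/2} Ã D̃^{-1/2}` of a finite simple graph lie in `[0, 2)`. -/
theorem augNormLaplacian_eigenvalue_mem_Ico
    (N : ℕ) (G : SimpleGraph (Fin N)) [DecidableRel G.Adj]
    (A D Atil Dtil DtilInvSqrt Δ : Matrix (Fin N) (Fin N) ℝ)
    (hA : A = G.adjMatrix ℝ)
    (hD : D = Matrix.diagonal (fun i => (G.degree i : ℝ)))
    (hAtil : Atil = A + 1)
    (hDtil : Dtil = D + 1)
    (hDtilInvSqrt : DtilInvSqrt = Matrix.diagonal
      (fun i => (Real.sqrt ((G.degree i : ℝ) + 1))⁻¹))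
    (hΔ : Δ = 1 - DtilInvSqrt * Atil * DtilInvSqrt)
    (μ : ℝ) (v : Fin N → ℝ) (hv : v ≠ 0) (heig : Δ.mulVec v = μ • v) :
    0 ≤ μ ∧ μ < 2 :=
  augNormLaplacian_eigenvalue_mem_Ico_general N G A Atil DtilInvSqrt Δ hA hAtil hDtilInvSqrt hΔ μ v
    hv heig
end

section
/- Let G be a finite simple graph on N vertices with adjacency matrix A and diagonal degree matrix D. Let Ã = A + I_N and D̃ = D + I_N, and define P = D̃^{−1/2} Ã D̃^{−1/2}. Then every eigenvalue μ of P satisfies −1 < μ ≤ 1. -/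
/-!
With `w = D̃^{-1/2} v`, the eigen-equation `P v = μ v` becomes the generalised Rayleigh
quotient `μ ⟪w, D̃ w⟫ = ⟪w, Ã w⟫`. Now `D̃ - Ã = D - A` is the graph Laplacian, which is
positive semidefinite, and `D̃ + Ã = (D + A) + 2` is the signless Laplacian plus `2`, which is
positive definite. The first gives `μ ≤ 1`, the second `-1 < μ`.
-/

open Finset Matrix

namespace SimpleGraph

variable {V : Type*} (R : Type*) [Fintype V] [DecidableEq V] (G : SimpleGraph V)
  [DecidableRel G.Adj]

def signlessLapMatrix [AddMonoidWithOne R] : Matrix V V R := G.degMatrix R + G.adjMatrix R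

theorem isSymm_signlessLapMatrix [AddMonoidWithOne R] : (G.signlessLapMatrix R).IsSymm :=
  (G.isSymm_degMatrix R).add G.isSymm_adjMatrix

theorem signlessLapMatrix_toLinearMap₂' [Field R] [CharZero R] (x : V → R) :
    toLinearMap₂' R (G.signlessLapMatrix R) x x =
    (∑ i : V, ∑ j : V, if G.Adj i j then (x i + x j) ^ 2 else 0) / 2 := by
  simp_rw [toLinearMap₂'_apply', signlessLapMatrix, add_mulVec, dotProduct_add,
    dotProduct_mulVec_degMatrix, dotProduct_mulVec_adjMatrix, ← sum_add_distrib,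
    degree_eq_sum_if_adj, sum_mul, ite_mul, one_mul, zero_mul, ← sum_add_distrib, ite_add_ite,
    add_zero]
  -- Count every edge from both ends: swap the order of summation in one of two copies.
  rw [← add_self_div_two (∑ i : V, ∑ j : V, _)]
  conv_lhs => enter [1, 2, 2, i, 2, j]; rw [if_congr (adj_comm G i j) rfl rfl]
  conv_lhs => enter [1, 2]; rw [Finset.sum_comm]
  simp_rw [← sum_add_distrib, ite_add_ite]
  congr 2 with i
  congr 2 with j
  ring_nf

theorem posSemidef_signlessLapMatrix [Field R] [LinearOrder R] [IsStrictOrderedRing R]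
    [StarRing R] [TrivialStar R] : PosSemidef (G.signlessLapMatrix R) := by
  refine .of_dotProduct_mulVec_nonneg ?_ (fun x ↦ ?_)
  · rw [IsHermitian, conjTranspose_eq_transpose_of_trivial, isSymm_signlessLapMatrix]
  · rw [star_trivial, ← toLinearMap₂'_apply', signlessLapMatrix_toLinearMap₂']
    positivity

end SimpleGraph

namespace Matrix

variable {n R : Type*} [Fintype n]

theorem dotProduct_mulVec_mul_mul_of_isSymm [CommSemiring R] {S : Matrix n n R} (hS : S.IsSymm)
    (M : Matrix n n R) (v : n → R) :
    v ⬝ᵥ ((S * M * S) *ᵥ v) = (S *ᵥ v) ⬝ᵥ (M *ᵥ (S *ᵥ v)) := by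
  rw [← mulVec_mulVec, ← mulVec_mulVec, dotProduct_mulVec v S, ← mulVec_transpose, hS.eq]

theorem dotProduct_mulVec_diagonal_inv_sqrt [DecidableEq n] {d : n → ℝ} (hd : ∀ i, 0 < d i)
    (v : n → ℝ) :
    (diagonal (fun i => (√(d i))⁻¹) *ᵥ v) ⬝ᵥ
        (diagonal d *ᵥ (diagonal (fun i => (√(d i))⁻¹) *ᵥ v)) = v ⬝ᵥ v := by
  have hone : (fun i => (√(d i))⁻¹ * d i * (√(d i))⁻¹) = fun _ => 1 := by
    funext i
    rw [mul_right_comm, ← mul_inv, Real.mul_self_sqrt (hd i).le, inv_mul_cancel₀ (hd i).ne']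
  rw [← dotProduct_mulVec_mul_mul_of_isSymm (isSymm_diagonal _), diagonal_mul_diagonal,
    diagonal_mul_diagonal, hone, diagonal_one, one_mulVec]

theorem mem_Ioc_of_mul_dotProduct_eq [Field R] [LinearOrder R] [IsStrictOrderedRing R]
    [StarRing R] [TrivialStar R] {D M : Matrix n n R}
    (hsub : (D - M).PosSemidef) (hadd : (D + M).PosDef) {w : n → R} (hw : w ≠ 0) {μ : R}
    (h : μ * (w ⬝ᵥ (D *ᵥ w)) = w ⬝ᵥ (M *ᵥ w)) : -1 < μ ∧ μ ≤ 1 := by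
  have hsub' := hsub.dotProduct_mulVec_nonneg w
  have hadd' := hadd.dotProduct_mulVec_pos hw
  rw [star_trivial, sub_mulVec, dotProduct_sub] at hsub'
  rw [star_trivial, add_mulVec, dotProduct_add] at hadd'
  constructor <;> nlinarith

end Matrix

open SimpleGraph

/-- The eigenvalues of the propagation matrix `P = D̃^{-1/2} Ã D̃^{-1/2}`
of a finite simple graph lie in `(-1, 1]`. -/
theorem propagationMatrix_eigenvalue_mem_Ioc
    (N : ℕ) (G : SimpleGraph (Fin N)) [DecidableRel G.Adj]
    (A D Atil Dtil DtilInvSqrt P : Matrix (Fin N) (Fin N) ℝ)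
    (hA : A = G.adjMatrix ℝ)
    (hD : D = Matrix.diagonal (fun i => (G.degree i : ℝ)))
    (hAtil : Atil = A + 1)
    (hDtil : Dtil = D + 1)
    (hDtilInvSqrt : DtilInvSqrt = Matrix.diagonal
      (fun i => (Real.sqrt ((G.degree i : ℝ) + 1))⁻¹))
    (hP : P = DtilInvSqrt * Atil * DtilInvSqrt)
    (μ : ℝ) (v : Fin N → ℝ) (hv : v ≠ 0) (heig : P.mulVec v = μ • v) :
    -1 < μ ∧ μ ≤ 1 := by
  have hDtil_diag : Dtil = diagonal (fun i => (G.degree i : ℝ) + 1) := by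
    rw [hDtil, hD, ← diagonal_one, diagonal_add]
  have hnorm := dotProduct_mulVec_diagonal_inv_sqrt
    (fun i => by positivity : ∀ i, 0 < (G.degree i : ℝ) + 1) v
  rw [← hDtilInvSqrt, ← hDtil_diag] at hnorm
  set w := DtilInvSqrt *ᵥ v
  have hw : w ≠ 0 := fun hw => hv (dotProduct_self_eq_zero.mp (by simp [← hnorm, hw]))
  have hrayleigh : μ * (w ⬝ᵥ (Dtil *ᵥ w)) = w ⬝ᵥ (Atil *ᵥ w) := by
    have hsymm : DtilInvSqrt.IsSymm := hDtilInvSqrt ▸ isSymm_diagonal _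
    rw [hnorm, ← dotProduct_mulVec_mul_mul_of_isSymm hsymm, ← hP, heig, dotProduct_smul,
      smul_eq_mul]
  have hsub : Dtil - Atil = G.lapMatrix ℝ := by
    rw [hDtil, hAtil, hD, hA, add_sub_add_right_eq_sub, lapMatrix, degMatrix]
  have hadd : Dtil + Atil = G.signlessLapMatrix ℝ + 2 := by
    rw [hDtil, hAtil, hD, hA, signlessLapMatrix, degMatrix, add_add_add_comm, one_add_one_eq_two]
  refine mem_Ioc_of_mul_dotProduct_eq ?_ ?_ hw hrayleigh
  · exact hsub ▸ posSemidef_lapMatrix ℝ G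
  · exact hadd ▸ PosDef.posSemidef_add (posSemidef_signlessLapMatrix ℝ G) (.ofNat 2)
end

section
/- Let Δ̃ ∈ ℝ^{N×N} be real symmetric and positive semidefinite. Then for every X ∈ ℝ^{N×C} and every weight matrix W ∈ ℝ^{C×C'}, one has E(XW) ≤ ‖W^T‖₂² · E(X), where ‖W^T‖₂ denotes the spectral norm (largest singular value) of W^T and E(Y) = tr(Y^T Δ̃ Y). -/
open Matrix

/-- The spectral norm (largest singular value) of a real matrix, i.e. the
operator norm of the induced linear map between Euclidean spaces. -/
noncomputable def matrixSpectralNorm {m n : ℕ} (M : Matrix (Fin m) (Fin n) ℝ) : ℝ :=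
  ‖LinearMap.toContinuousLinearMap (Matrix.toEuclideanLin M)‖

/-! Factor `Δ = Bᵀ B`. Then `E(Y) = tr((BY)ᵀ(BY))` is the sum of the squared norms of the rows
of `BY`, and each row of `BXW` is `Wᵀ` applied to the corresponding row of `BX`, so its squared
norm grows by a factor of at most `‖Wᵀ‖₂²`. -/

open scoped MatrixOrder in
lemma Matrix.PosSemidef.exists_eq_transpose_mul_self {n : Type*} [Fintype n] [DecidableEq n]
    {A : Matrix n n ℝ} (hA : A.PosSemidef) : ∃ B : Matrix n n ℝ, A = Bᵀ * B := by
  obtain ⟨B, hB⟩ := CStarAlgebra.nonneg_iff_eq_star_mul_self.mp hA.nonneg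
  exact ⟨B, hB⟩

lemma dotProduct_self_eq_norm_toLp_sq {ι : Type*} [Fintype ι] (x : ι → ℝ) :
    x ⬝ᵥ x = ‖WithLp.toLp 2 x‖ ^ 2 := by
  rw [← real_inner_self_eq_norm_sq, EuclideanSpace.inner_toLp_toLp, star_trivial]

lemma mulVec_dotProduct_mulVec_le {m n : ℕ} (M : Matrix (Fin m) (Fin n) ℝ) (x : Fin n → ℝ) :
    (M *ᵥ x) ⬝ᵥ (M *ᵥ x) ≤ matrixSpectralNorm M ^ 2 * (x ⬝ᵥ x) := by
  rw [dotProduct_self_eq_norm_toLp_sq, dotProduct_self_eq_norm_toLp_sq, matrixSpectralNorm,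
    ← mul_pow]
  gcongr
  exact (LinearMap.toContinuousLinearMap (toEuclideanLin M)).le_opNorm (WithLp.toLp 2 x)

lemma trace_transpose_mul_self_eq_sum {m n R : Type*} [Fintype m] [Fintype n] [CommSemiring R]
    (A : Matrix m n R) : (Aᵀ * A).trace = ∑ i, A i ⬝ᵥ A i := by
  rw [trace_mul_comm]
  rfl

lemma mul_apply_eq_transpose_mulVec {l m n R : Type*} [Fintype m] [CommSemiring R]
    (Y : Matrix l m R) (W : Matrix m n R) (i : l) : (Y * W) i = Wᵀ *ᵥ Y i := by
  rw [mulVec_transpose]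
  rfl

lemma trace_transpose_mul_self_mul_le {m : Type*} [Fintype m] {C C' : ℕ}
    (Y : Matrix m (Fin C) ℝ) (W : Matrix (Fin C) (Fin C') ℝ) :
    ((Y * W)ᵀ * (Y * W)).trace ≤ matrixSpectralNorm Wᵀ ^ 2 * (Yᵀ * Y).trace := by
  simp only [trace_transpose_mul_self_eq_sum, Finset.mul_sum, mul_apply_eq_transpose_mulVec]
  gcongr with i
  exact mulVec_dotProduct_mulVec_le _ _

/-- If `Δ̃` is symmetric PSD then `E(XW) ≤ ‖Wᵀ‖₂² E(X)` for every
`X ∈ ℝ^{N×C}` and `W ∈ ℝ^{C×C'}`, where `E(Y) = tr(Yᵀ Δ̃ Y)` and `‖·‖₂`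
is the spectral norm. -/
theorem energy_mul_weight_le
    (N C C' : ℕ) (Δ : Matrix (Fin N) (Fin N) ℝ) (hpsd : Δ.PosSemidef)
    (X : Matrix (Fin N) (Fin C) ℝ) (W : Matrix (Fin C) (Fin C') ℝ) :
    Matrix.trace ((X * W)ᵀ * Δ * (X * W)) ≤
      (matrixSpectralNorm Wᵀ) ^ 2 * Matrix.trace (Xᵀ * Δ * X) := by
  obtain ⟨B, rfl⟩ := hpsd.exists_eq_transpose_mul_self
  have energy_eq {k : ℕ} (Y : Matrix (Fin N) (Fin k) ℝ) :
      Yᵀ * (Bᵀ * B) * Y = (B * Y)ᵀ * (B * Y) := by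
    simp only [transpose_mul, Matrix.mul_assoc]
  rw [energy_eq, energy_eq, ← Matrix.mul_assoc B X W]
  exact trace_transpose_mul_self_mul_le (B * X) W
end

section
/- Let G be a finite graph on N vertices with symmetric nonnegative edge weights w_{ij}, degrees d_i = Σ_j w_{ij}, and Dirichlet energy E(X) = (1/2) Σ_{i,j} w_{ij} ‖ x_i/√(1+d_i) − x_j/√(1+d_j) ‖₂² for X ∈ ℝ^{N×C} with rows x_i. Let ReLU be applied entrywise, ReLU(x) = max(x, 0). Then E(ReLU(X)) ≤ E(X). -/
/-! ReLU is a 1-Lipschitz function fixing `0`, and it commutes with division by the nonnegative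
normalisations `√(1 + dᵢ)`. Hence every term `wᵢⱼ (xᵢₖ/√(1+dᵢ) - xⱼₖ/√(1+dⱼ))²` of the energy can
only shrink when ReLU is applied, since the weights are nonnegative. -/

theorem sq_max_sub_max_le_sq_sub (a b c : ℝ) : (max a c - max b c) ^ 2 ≤ (a - b) ^ 2 :=
  sq_le_sq.2 (abs_max_sub_max_le_abs a b c)

theorem max_zero_div {c : ℝ} (a : ℝ) (hc : 0 ≤ c) : max a 0 / c = max (a / c) 0 := by
  rw [← max_div_div_right hc, zero_div]

theorem sq_max_zero_div_sub_le {s t : ℝ} (a b : ℝ) (hs : 0 ≤ s) (ht : 0 ≤ t) :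
    (max a 0 / s - max b 0 / t) ^ 2 ≤ (a / s - b / t) ^ 2 := by
  rw [max_zero_div a hs, max_zero_div b ht]
  exact sq_max_sub_max_le_sq_sub _ _ _

theorem dirichletEnergy_relu_le_general
    (N C : ℕ) (w : Matrix (Fin N) (Fin N) ℝ)
    (hnonneg : ∀ i j, 0 ≤ w i j)
    (d : Fin N → ℝ)
    (X : Matrix (Fin N) (Fin C) ℝ) :
    (1 / 2) * ∑ i, ∑ j, w i j *
        ∑ k, (max (X i k) 0 / Real.sqrt (1 + d i)
              - max (X j k) 0 / Real.sqrt (1 + d j)) ^ 2 ≤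
    (1 / 2) * ∑ i, ∑ j, w i j *
        ∑ k, (X i k / Real.sqrt (1 + d i) - X j k / Real.sqrt (1 + d j)) ^ 2 := by
  gcongr (1 / 2) * ∑ i, ∑ j, w i j * ∑ k, ?_ with i _ j _ k _
  · exact hnonneg i j
  · exact sq_max_zero_div_sub_le _ _ (Real.sqrt_nonneg _) (Real.sqrt_nonneg _)

/-- Entrywise ReLU does not increase the Dirichlet energy
`E(X) = (1/2) ∑_{i,j} w_{ij} ‖x_i/√(1+d_i) - x_j/√(1+d_j)‖₂²`. -/
theorem dirichletEnergy_relu_le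
    (N C : ℕ) (w : Matrix (Fin N) (Fin N) ℝ)
    (hsymm : ∀ i j, w i j = w j i)
    (hnonneg : ∀ i j, 0 ≤ w i j)
    (d : Fin N → ℝ) (hd : ∀ i, d i = ∑ j, w i j)
    (X : Matrix (Fin N) (Fin C) ℝ) :
    (1 / 2) * ∑ i, ∑ j, w i j *
        ∑ k, (max (X i k) 0 / Real.sqrt (1 + d i)
              - max (X j k) 0 / Real.sqrt (1 + d j)) ^ 2 ≤
    (1 / 2) * ∑ i, ∑ j, w i j *
        ∑ k, (X i k / Real.sqrt (1 + d i) - X j k / Real.sqrt (1 + d j)) ^ 2 :=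
  dirichletEnergy_relu_le_general N C w hnonneg d X
end

section
/- Let G be a finite graph on N vertices with symmetric nonnegative edge weights w_{ij}, degrees d_i = Σ_j w_{ij}, and Dirichlet energy E(X) = (1/2) Σ_{i,j} w_{ij} ‖ x_i/√(1+d_i) − x_j/√(1+d_j) ‖₂² for X ∈ ℝ^{N×C} with rows x_i. Let α ∈ [0, 1] and let LeakyReLU_α be applied entrywise, where LeakyReLU_α(x) = x for x ≥ 0 and LeakyReLU_α(x) = αx for x < 0. Then E(LeakyReLU_α(X)) ≤ E(X). -/
/-!
Leaky-ReLU is positively homogeneous, so it commutes with the normalisation `x ↦ x / √(1 + d)`;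
and for `α ≤ 1` it equals `x ↦ max x (α x)`, a maximum of 1-Lipschitz maps. Hence every edge term
of the energy can only shrink.
-/

/-- The Leaky-ReLU activation with negative slope `α`. -/
noncomputable def leakyReLU (α : ℝ) (x : ℝ) : ℝ := if 0 ≤ x then x else α * x

lemma leakyReLU_eq_max {α : ℝ} (hα : α ≤ 1) (x : ℝ) : leakyReLU α x = max x (α * x) := by
  unfold leakyReLU
  split_ifs with hx
  · exact (max_eq_left (by nlinarith)).symm
  · exact (max_eq_right (by nlinarith)).symm

lemma leakyReLU_mul_of_nonneg (α : ℝ) {c : ℝ} (hc : 0 ≤ c) (x : ℝ) :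
    leakyReLU α (c * x) = c * leakyReLU α x := by
  unfold leakyReLU
  rcases hc.eq_or_lt with rfl | hc
  · simp
  · simp only [mul_nonneg_iff_of_pos_left hc]
    split_ifs <;> ring

lemma leakyReLU_div_of_nonneg (α : ℝ) {s : ℝ} (hs : 0 ≤ s) (x : ℝ) :
    leakyReLU α x / s = leakyReLU α (x / s) := by
  rw [div_eq_inv_mul, div_eq_inv_mul, leakyReLU_mul_of_nonneg α (inv_nonneg.2 hs)]

lemma abs_leakyReLU_sub_le {α : ℝ} (hα0 : 0 ≤ α) (hα1 : α ≤ 1) (a b : ℝ) :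
    |leakyReLU α a - leakyReLU α b| ≤ |a - b| := by
  rw [leakyReLU_eq_max hα1, leakyReLU_eq_max hα1]
  have hscaled : |α * a - α * b| ≤ |a - b| := by
    rw [← mul_sub, abs_mul, abs_of_nonneg hα0]
    exact mul_le_of_le_one_left (abs_nonneg _) hα1
  exact (abs_max_sub_max_le_max _ _ _ _).trans (max_le le_rfl hscaled)

lemma sq_leakyReLU_sub_le {α : ℝ} (hα0 : 0 ≤ α) (hα1 : α ≤ 1) (a b : ℝ) :
    (leakyReLU α a - leakyReLU α b) ^ 2 ≤ (a - b) ^ 2 :=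
  sq_le_sq.2 (abs_leakyReLU_sub_le hα0 hα1 a b)

theorem dirichletEnergy_leakyReLU_le_general
    (N C : ℕ) (w : Matrix (Fin N) (Fin N) ℝ)
    (hnonneg : ∀ i j, 0 ≤ w i j)
    (d : Fin N → ℝ)
    (α : ℝ) (hα0 : 0 ≤ α) (hα1 : α ≤ 1)
    (X : Matrix (Fin N) (Fin C) ℝ) :
    (1 / 2) * ∑ i, ∑ j, w i j *
        ∑ k, (leakyReLU α (X i k) / Real.sqrt (1 + d i)
              - leakyReLU α (X j k) / Real.sqrt (1 + d j)) ^ 2 ≤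
    (1 / 2) * ∑ i, ∑ j, w i j *
        ∑ k, (X i k / Real.sqrt (1 + d i) - X j k / Real.sqrt (1 + d j)) ^ 2 := by
  gcongr _ * ∑ i, ∑ j, w i j * ∑ k, ?_ with i _ j _ k _
  · exact hnonneg i j
  · rw [leakyReLU_div_of_nonneg α (Real.sqrt_nonneg _),
      leakyReLU_div_of_nonneg α (Real.sqrt_nonneg _)]
    exact sq_leakyReLU_sub_le hα0 hα1 _ _

/-- Entrywise Leaky-ReLU with slope `α ∈ [0,1]` does not increase the Dirichlet
energy `E(X) = (1/2) ∑_{i,j} w_{ij} ‖x_i/√(1+d_i) - x_j/√(1+d_j)‖₂²`. -/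
theorem dirichletEnergy_leakyReLU_le
    (N C : ℕ) (w : Matrix (Fin N) (Fin N) ℝ)
    (hsymm : ∀ i j, w i j = w j i)
    (hnonneg : ∀ i j, 0 ≤ w i j)
    (d : Fin N → ℝ) (hd : ∀ i, d i = ∑ j, w i j)
    (α : ℝ) (hα0 : 0 ≤ α) (hα1 : α ≤ 1)
    (X : Matrix (Fin N) (Fin C) ℝ) :
    (1 / 2) * ∑ i, ∑ j, w i j *
        ∑ k, (leakyReLU α (X i k) / Real.sqrt (1 + d i)
              - leakyReLU α (X j k) / Real.sqrt (1 + d j)) ^ 2 ≤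
    (1 / 2) * ∑ i, ∑ j, w i j *
        ∑ k, (X i k / Real.sqrt (1 + d i) - X j k / Real.sqrt (1 + d j)) ^ 2 :=
  dirichletEnergy_leakyReLU_le_general N C w hnonneg d α hα0 hα1 X
end

section
/- Let σ : ℝ → ℝ be 1-Lipschitz and positively homogeneous (σ(cx) = cσ(x) for all c > 0, x ∈ ℝ). Let G be a finite graph on N vertices with symmetric nonnegative edge weights w_{ij} and degrees d_i = Σ_j w_{ij}, with Dirichlet energy E(X) = (1/2) Σ_{i,j} w_{ij} ‖ x_i/√(1+d_i) − x_j/√(1+d_j) ‖₂² for X ∈ ℝ^{N×C} with rows x_i. Then, applying σ entrywise, E(σ(X)) ≤ E(X). -/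
/-!
Positive homogeneity lets σ commute with the positive degree normalisation,
`σ(x)/√(1+dᵢ) = σ(x/√(1+dᵢ))`, so every term of `E(σ(X))` is the square of a difference
`σ(a) - σ(b)` whose counterpart in `E(X)` is `(a - b)²`; the Lipschitz bound compares
them term by term, and the weights are nonnegative.
-/

theorem div_apply_of_posHomogeneous {σ : ℝ → ℝ}
    (hhom : ∀ (c x : ℝ), 0 < c → σ (c * x) = c * σ x) {c : ℝ} (hc : 0 < c) (x : ℝ) :
    σ x / c = σ (x / c) := by
  rw [div_eq_inv_mul, div_eq_inv_mul, hhom _ _ (inv_pos.mpr hc)]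

theorem sq_sub_le_of_abs_sub_le {σ : ℝ → ℝ} (hlip : ∀ x y : ℝ, |σ x - σ y| ≤ |x - y|)
    (x y : ℝ) : (σ x - σ y) ^ 2 ≤ (x - y) ^ 2 :=
  sq_le_sq.mpr (by simpa only [abs_abs] using hlip x y)

theorem weighted_sum_sq_sub_activation_le {ι κ : Type*} [Fintype ι] [Fintype κ]
    {σ : ℝ → ℝ} (hlip : ∀ x y : ℝ, |σ x - σ y| ≤ |x - y|)
    (hhom : ∀ (c x : ℝ), 0 < c → σ (c * x) = c * σ x)
    {w : ι → ι → ℝ} (hw : ∀ i j, 0 ≤ w i j) {s : ι → ℝ} (hs : ∀ i, 0 < s i)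
    (X : ι → κ → ℝ) :
    ∑ i, ∑ j, w i j * ∑ k, (σ (X i k) / s i - σ (X j k) / s j) ^ 2 ≤
      ∑ i, ∑ j, w i j * ∑ k, (X i k / s i - X j k / s j) ^ 2 := by
  refine Finset.sum_le_sum fun i _ => Finset.sum_le_sum fun j _ =>
    mul_le_mul_of_nonneg_left (Finset.sum_le_sum fun k _ => ?_) (hw i j)
  rw [div_apply_of_posHomogeneous hhom (hs i), div_apply_of_posHomogeneous hhom (hs j)]
  exact sq_sub_le_of_abs_sub_le hlip _ _

theorem dirichletEnergy_activation_le_general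
    (σ : ℝ → ℝ)
    (hlip : ∀ x y : ℝ, |σ x - σ y| ≤ |x - y|)
    (hhom : ∀ (c x : ℝ), 0 < c → σ (c * x) = c * σ x)
    (N C : ℕ) (w : Matrix (Fin N) (Fin N) ℝ)
    (hnonneg : ∀ i j, 0 ≤ w i j)
    (d : Fin N → ℝ) (hd : ∀ i, d i = ∑ j, w i j)
    (X : Matrix (Fin N) (Fin C) ℝ) :
    (1 / 2) * ∑ i, ∑ j, w i j *
        ∑ k, (σ (X i k) / Real.sqrt (1 + d i)
              - σ (X j k) / Real.sqrt (1 + d j)) ^ 2 ≤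
    (1 / 2) * ∑ i, ∑ j, w i j *
        ∑ k, (X i k / Real.sqrt (1 + d i) - X j k / Real.sqrt (1 + d j)) ^ 2 := by
  have hnorm : ∀ i, 0 < Real.sqrt (1 + d i) := fun i => by
    have : 0 ≤ d i := hd i ▸ Finset.sum_nonneg fun j _ => hnonneg i j
    positivity
  exact mul_le_mul_of_nonneg_left
    (weighted_sum_sq_sub_activation_le hlip hhom hnonneg hnorm X) (by norm_num)

/-- Any 1-Lipschitz, positively homogeneous activation `σ` applied entrywise
does not increase the Dirichlet energy
`E(X) = (1/2) ∑_{i,j} w_{ij} ‖x_i/√(1+d_i) - x_j/√(1+d_j)‖₂²`. -/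
theorem dirichletEnergy_activation_le
    (σ : ℝ → ℝ)
    (hlip : ∀ x y : ℝ, |σ x - σ y| ≤ |x - y|)
    (hhom : ∀ (c x : ℝ), 0 < c → σ (c * x) = c * σ x)
    (N C : ℕ) (w : Matrix (Fin N) (Fin N) ℝ)
    (hsymm : ∀ i j, w i j = w j i)
    (hnonneg : ∀ i j, 0 ≤ w i j)
    (d : Fin N → ℝ) (hd : ∀ i, d i = ∑ j, w i j)
    (X : Matrix (Fin N) (Fin C) ℝ) :
    (1 / 2) * ∑ i, ∑ j, w i j *
        ∑ k, (σ (X i k) / Real.sqrt (1 + d i)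
              - σ (X j k) / Real.sqrt (1 + d j)) ^ 2 ≤
    (1 / 2) * ∑ i, ∑ j, w i j *
        ∑ k, (X i k / Real.sqrt (1 + d i) - X j k / Real.sqrt (1 + d j)) ^ 2 :=
  dirichletEnergy_activation_le_general σ hlip hhom N C w hnonneg d hd X
end

section
/- Let G be a d-regular finite graph on N vertices with symmetric nonnegative edge weights w_{ij} and all degrees equal to d (d_i = d for all i), with Dirichlet energy E(X) = (1/2) Σ_{i,j} w_{ij} ‖ x_i/√(1+d) − x_j/√(1+d) ‖₂² for X ∈ ℝ^{N×C} with rows x_i. Then for any 1-Lipschitz function σ : ℝ → ℝ applied entrywise (e.g., ReLU, Leaky-ReLU, Tanh, or Sigmoid), E(σ(X)) ≤ E(X). -/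
theorem sq_div_sub_div_le_of_abs_sub_le {σ : ℝ → ℝ} (hlip : ∀ x y : ℝ, |σ x - σ y| ≤ |x - y|)
    (a b c : ℝ) : (σ a / c - σ b / c) ^ 2 ≤ (a / c - b / c) ^ 2 := by
  rw [div_sub_div_same, div_sub_div_same, div_pow, div_pow]
  exact div_le_div_of_nonneg_right (sq_le_sq.mpr (hlip a b)) (sq_nonneg c)

theorem dirichletEnergy_activation_le_regular_general
    (σ : ℝ → ℝ)
    (hlip : ∀ x y : ℝ, |σ x - σ y| ≤ |x - y|)
    (N C : ℕ) (w : Matrix (Fin N) (Fin N) ℝ)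
    (hnonneg : ∀ i j, 0 ≤ w i j)
    (d : ℝ)
    (X : Matrix (Fin N) (Fin C) ℝ) :
    (1 / 2) * ∑ i, ∑ j, w i j *
        ∑ k, (σ (X i k) / Real.sqrt (1 + d)
              - σ (X j k) / Real.sqrt (1 + d)) ^ 2 ≤
    (1 / 2) * ∑ i, ∑ j, w i j *
        ∑ k, (X i k / Real.sqrt (1 + d) - X j k / Real.sqrt (1 + d)) ^ 2 := by
  gcongr _ * ∑ i, ∑ j, w i j * ?_ with i _ j _
  · exact hnonneg i j
  · exact Finset.sum_le_sum fun k _ => sq_div_sub_div_le_of_abs_sub_le hlip _ _ _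

/-- For a `d`-regular weighted graph, any 1-Lipschitz activation `σ` applied
entrywise does not increase the Dirichlet energy
`E(X) = (1/2) ∑_{i,j} w_{ij} ‖x_i/√(1+d) - x_j/√(1+d)‖₂²`. -/
theorem dirichletEnergy_activation_le_regular
    (σ : ℝ → ℝ)
    (hlip : ∀ x y : ℝ, |σ x - σ y| ≤ |x - y|)
    (N C : ℕ) (w : Matrix (Fin N) (Fin N) ℝ)
    (hsymm : ∀ i j, w i j = w j i)
    (hnonneg : ∀ i j, 0 ≤ w i j)
    (d : ℝ) (hreg : ∀ i, ∑ j, w i j = d)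
    (X : Matrix (Fin N) (Fin C) ℝ) :
    (1 / 2) * ∑ i, ∑ j, w i j *
        ∑ k, (σ (X i k) / Real.sqrt (1 + d)
              - σ (X j k) / Real.sqrt (1 + d)) ^ 2 ≤
    (1 / 2) * ∑ i, ∑ j, w i j *
        ∑ k, (X i k / Real.sqrt (1 + d) - X j k / Real.sqrt (1 + d)) ^ 2 :=
  dirichletEnergy_activation_le_regular_general σ hlip N C w hnonneg d X
end
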